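/- Let A ∈ ℝ^{m×n} and let P ∈ ℝ^{m×l}, Q ∈ ℝ^{n×k} both have orthonormal columns. Then for any matrix C ∈ ℝ^{l×k}, ‖A − P C Qᵀ‖_F² = ‖A‖_F² − ‖Pᵀ A Q‖_F² + ‖Pᵀ A Q − C‖_F². In particular, C = [Pᵀ A Q]_r minimizes ‖A − P C Qᵀ‖_F over rank-r matrices C, with minimum value ‖A‖_F² − ∑_{i=1}^r σ_i(Pᵀ A Q)². -/

import Mathlib

open Matrix BigOperators Finset

/-- Squared Frobenius norm of a real matrix. -/
noncomputable def frobSq {m n : ℕ} (A : Matrix (Fin m) (Fin n) ℝ) : ℝ :=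
  ∑ i, ∑ j, (A i j) ^ 2

theorem Matrix.isHermitian_transpose_mul_self {m n : Type*} [Fintype m]
    (A : Matrix m n ℝ) : (Aᵀ * A).IsHermitian := by
  simpa [Matrix.conjTranspose_eq_transpose_of_trivial] using
    Matrix.isHermitian_conjTranspose_mul_self A

/-- Squares of the singular values of `A`, in decreasing order, indexed by `ℕ`
(equal to `0` beyond the number of columns): the eigenvalues of `Aᵀ * A` sorted
decreasingly. -/
noncomputable def sValSq {m n : ℕ} (A : Matrix (Fin m) (Fin n) ℝ) : ℕ → ℝ :=
  fun i =>
    if h : i < n then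
      (Matrix.isHermitian_transpose_mul_self A).eigenvalues
        ((Tuple.sort (fun j => -(Matrix.isHermitian_transpose_mul_self A).eigenvalues j)) ⟨i, h⟩)
    else 0

/-- The `i`-th largest singular value (0-indexed) of a real matrix. -/
noncomputable def sVal {m n : ℕ} (A : Matrix (Fin m) (Fin n) ℝ) : ℕ → ℝ :=
  fun i => Real.sqrt (sValSq A i)


lemma frobSq_eq_trace {m n : ℕ} (A : Matrix (Fin m) (Fin n) ℝ) :
    frobSq A = (Aᵀ * A).trace := by
  simp only [frobSq, Matrix.trace, Matrix.diag_apply, mul_apply, transpose_apply, pow_two]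
  rw [Finset.sum_comm]

lemma frobSq_nonneg {m n : ℕ} (A : Matrix (Fin m) (Fin n) ℝ) : 0 ≤ frobSq A :=
  Finset.sum_nonneg fun _ _ => Finset.sum_nonneg fun _ _ => sq_nonneg _

lemma frobSq_mul_le {m n s : ℕ} (X : Matrix (Fin m) (Fin n) ℝ)
    (V : Matrix (Fin n) (Fin s) ℝ) (hV : Vᵀ * V = 1) :
    frobSq (X * V) ≤ frobSq X := by
  set P : Matrix (Fin n) (Fin n) ℝ := V * Vᵀ with hP
  have hidem : (1 - P) * (1 - P) = 1 - P := by
    rw [sub_mul, mul_sub, mul_sub, one_mul, mul_one, hP,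
      Matrix.mul_assoc V Vᵀ (V * Vᵀ), ← Matrix.mul_assoc Vᵀ V Vᵀ, hV, Matrix.one_mul Vᵀ,
      sub_self, sub_zero, Matrix.one_mul (V * Vᵀ)]
  have htr : (1 - P)ᵀ = 1 - P := by simp [hP, transpose_sub, transpose_mul]
  have hXV : ((X * V)ᵀ * (X * V)).trace = (Xᵀ * X * P).trace := by
    rw [Matrix.trace_mul_comm ((X*V)ᵀ) (X*V), transpose_mul,
      Matrix.mul_assoc X V (Vᵀ*Xᵀ), ← Matrix.mul_assoc V Vᵀ Xᵀ, ← hP,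
      ← Matrix.mul_assoc X P Xᵀ,
      Matrix.mul_assoc Xᵀ X P, Matrix.trace_mul_comm Xᵀ (X*P)]
  have key : frobSq (X * (1 - P)) = frobSq X - frobSq (X * V) := by
    rw [frobSq_eq_trace, frobSq_eq_trace, frobSq_eq_trace, hXV]
    rw [transpose_mul, htr]
    calc ((1 - P) * Xᵀ * (X * (1 - P))).trace
        = ((1 - P) * (Xᵀ * (X * (1 - P)))).trace := by rw [Matrix.mul_assoc]
      _ = ((Xᵀ * (X * (1 - P))) * (1 - P)).trace := by rw [Matrix.trace_mul_comm]
      _ = (Xᵀ * X * ((1 - P) * (1 - P))).trace := by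
            rw [← Matrix.mul_assoc Xᵀ X (1 - P), Matrix.mul_assoc (Xᵀ * X) (1-P) (1-P)]
      _ = (Xᵀ * X * (1 - P)).trace := by rw [hidem]
      _ = (Xᵀ * X).trace - (Xᵀ * X * P).trace := by
            rw [Matrix.mul_sub, Matrix.mul_one, Matrix.trace_sub]
  nlinarith [frobSq_nonneg (X * (1 - P))]

lemma frobSq_sub {m n : ℕ} (X Y : Matrix (Fin m) (Fin n) ℝ) :
    frobSq (X - Y) = frobSq X - 2 * (Xᵀ * Y).trace + frobSq Y := by
  rw [frobSq_eq_trace, frobSq_eq_trace, frobSq_eq_trace, transpose_sub, Matrix.sub_mul,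
    Matrix.mul_sub, Matrix.mul_sub, Matrix.trace_sub, Matrix.trace_sub, Matrix.trace_sub]
  have h : (Yᵀ * X).trace = (Xᵀ * Y).trace := by
    rw [← Matrix.trace_transpose (Yᵀ * X), transpose_mul, transpose_transpose]
  rw [h]; ring

lemma part1 {m n l k : ℕ} (A : Matrix (Fin m) (Fin n) ℝ)
    (P : Matrix (Fin m) (Fin l) ℝ) (hP : Pᵀ * P = 1)
    (Q : Matrix (Fin n) (Fin k) ℝ) (hQ : Qᵀ * Q = 1)
    (C : Matrix (Fin l) (Fin k) ℝ) :
    frobSq (A - P * C * Qᵀ) =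
      frobSq A - frobSq (Pᵀ * A * Q) + frobSq (Pᵀ * A * Q - C) := by
  have h1 : frobSq (P * C * Qᵀ) = frobSq C := by
    rw [frobSq_eq_trace, frobSq_eq_trace]
    calc ((P * C * Qᵀ)ᵀ * (P * C * Qᵀ)).trace
        = (Q * Cᵀ * (Pᵀ * P) * (C * Qᵀ)).trace := by
          rw [transpose_mul, transpose_mul, transpose_transpose]
          simp only [Matrix.mul_assoc]
      _ = (Q * (Cᵀ * (C * Qᵀ))).trace := by rw [hP, Matrix.mul_one, Matrix.mul_assoc]
      _ = ((Cᵀ * (C * Qᵀ)) * Q).trace := Matrix.trace_mul_comm _ _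
      _ = (Cᵀ * C * (Qᵀ * Q)).trace := by simp only [Matrix.mul_assoc]
      _ = (Cᵀ * C).trace := by rw [hQ, Matrix.mul_one]
  have h2 : (Aᵀ * (P * C * Qᵀ)).trace = ((Pᵀ * A * Q)ᵀ * C).trace := by
    calc (Aᵀ * (P * C * Qᵀ)).trace
        = ((Aᵀ * (P * C)) * Qᵀ).trace := by simp only [Matrix.mul_assoc]
      _ = (Qᵀ * (Aᵀ * (P * C))).trace := Matrix.trace_mul_comm _ _
      _ = ((Pᵀ * A * Q)ᵀ * C).trace := by
          rw [transpose_mul, transpose_mul, transpose_transpose]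
          simp only [Matrix.mul_assoc]
  rw [frobSq_sub, frobSq_sub, h1, h2]
  ring

lemma exists_V {l k : ℕ} (C : Matrix (Fin l) (Fin k) ℝ) (r : ℕ) (hC : C.rank ≤ r)
    (hrk : r ≤ k) :
    ∃ V : Matrix (Fin k) (Fin (k - r)) ℝ, Vᵀ * V = 1 ∧ C * V = 0 := by
  classical
  set K := LinearMap.ker (Matrix.toEuclideanLin C) with hK
  have hrank : C.rank = Module.finrank ℝ (LinearMap.range (Matrix.toEuclideanLin C)) := by
    rw [Matrix.rank_eq_finrank_range_toLin C (PiLp.basisFun 2 ℝ (Fin l))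
      (PiLp.basisFun 2 ℝ (Fin k))]
    rfl
  have hrn : Module.finrank ℝ (LinearMap.range (Matrix.toEuclideanLin C))
      + Module.finrank ℝ K = k := by
    rw [hK, LinearMap.finrank_range_add_finrank_ker]
    simp [finrank_euclideanSpace]
  have hdim : k - r ≤ Module.finrank ℝ K := by omega
  obtain ⟨v, hv⟩ := exists_linearIndependent_of_le_finrank hdim
  have hf : LinearIndependent ℝ (fun i => (v i : EuclideanSpace ℝ (Fin k))) :=
    hv.map' K.subtype K.ker_subtype
  haveI : WellFoundedLT (Fin (k - r)) := inferInstance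
  set g : Fin (k - r) → EuclideanSpace ℝ (Fin k) :=
    InnerProductSpace.gramSchmidtNormed ℝ (fun i => (v i : EuclideanSpace ℝ (Fin k))) with hg
  have hon : Orthonormal ℝ g := InnerProductSpace.gramSchmidtNormed_orthonormal hf
  have hmem : ∀ j, g j ∈ K := by
    intro j
    have h1 : g j ∈ Submodule.span ℝ (Set.range (fun i => (v i : EuclideanSpace ℝ (Fin k)))) := by
      have := InnerProductSpace.gramSchmidt_mem_span (𝕜 := ℝ)
        (f := fun i => (v i : EuclideanSpace ℝ (Fin k))) (j := j) le_rfl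
      rw [hg, InnerProductSpace.gramSchmidtNormed]
      exact Submodule.smul_mem _ _
        (Submodule.span_mono (Set.image_subset_range _ _) this)
    refine Submodule.span_le.mpr ?_ h1
    rintro x ⟨i, rfl⟩
    exact (v i).2
  refine ⟨fun i j => g j i, ?_, ?_⟩
  · ext j j'
    have := orthonormal_iff_ite.mp hon j j'
    simp only [Matrix.mul_apply, Matrix.transpose_apply, Matrix.one_apply]
    rw [← this]
    simp [Matrix.mul_apply, PiLp.inner_apply, RCLike.inner_apply, conj_trivial, mul_comm]
    rfl
  · ext a j
    have h0 : Matrix.toEuclideanLin C (g j) = 0 := hmem j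
    have : C *ᵥ (fun i => g j i) = 0 := by
      have := congrArg (WithLp.equiv 2 (Fin l → ℝ)) h0
      simpa [Matrix.ofLp_toEuclideanLin_apply] using this
    simp only [Matrix.mul_apply, Matrix.zero_apply]
    exact congrFun this a

lemma proj_diag_bounds {k s : ℕ} (W : Matrix (Fin k) (Fin s) ℝ) (hW : Wᵀ * W = 1)
    (i : Fin k) : 0 ≤ (W * Wᵀ) i i ∧ (W * Wᵀ) i i ≤ 1 := by
  have h0 : 0 ≤ (W * Wᵀ) i i := by
    simp only [Matrix.mul_apply, Matrix.transpose_apply]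
    exact Finset.sum_nonneg fun j _ => mul_self_nonneg _
  have hidem : (W * Wᵀ) * (W * Wᵀ) = W * Wᵀ := by
    rw [Matrix.mul_assoc W Wᵀ (W * Wᵀ), ← Matrix.mul_assoc Wᵀ W Wᵀ, hW, Matrix.one_mul]
  have hsym : ∀ a b, (W * Wᵀ) a b = (W * Wᵀ) b a := by
    intro a b
    simp only [Matrix.mul_apply, Matrix.transpose_apply]
    exact Finset.sum_congr rfl fun j _ => mul_comm _ _
  have hsq : (W * Wᵀ) i i = ∑ t, ((W * Wᵀ) i t) ^ 2 := by
    nth_rewrite 1 [← hidem]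
    rw [Matrix.mul_apply]
    exact Finset.sum_congr rfl fun t _ => by rw [hsym t i, pow_two]
  have hge : ((W * Wᵀ) i i) ^ 2 ≤ (W * Wᵀ) i i := by
    nth_rewrite 2 [hsq]
    exact Finset.single_le_sum (f := fun t => ((W * Wᵀ) i t) ^ 2)
      (fun t _ => sq_nonneg _) (Finset.mem_univ i)
  exact ⟨h0, by nlinarith⟩

lemma sum_mul_ge_tail {k q : ℕ} (hq : q < k) (μ c : Fin k → ℝ)
    (hμ : ∀ i j : Fin k, i ≤ j → μ j ≤ μ i)
    (hc0 : ∀ i, 0 ≤ c i) (hc1 : ∀ i, c i ≤ 1)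
    (hsum : ∑ i, c i = ((k - q : ℕ) : ℝ)) :
    ∑ i ∈ Finset.univ.filter (fun i : Fin k => q ≤ i.val), μ i ≤ ∑ i, μ i * c i := by
  set t := μ ⟨q, hq⟩ with ht
  have key : ∀ i : Fin k, t * c i - (if q ≤ i.val then t else 0)
      ≤ μ i * c i - (if q ≤ i.val then μ i else 0) := by
    intro i
    by_cases h : q ≤ i.val
    · simp only [h, if_pos]
      have h1 : μ i ≤ t := hμ ⟨q, hq⟩ i (by simpa [Fin.le_def] using h)
      nlinarith [hc1 i]
    · simp only [h, if_neg, if_false]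
      have h1 : t ≤ μ i := hμ i ⟨q, hq⟩ (by simp only [Fin.le_def]; omega)
      nlinarith [hc0 i]
  have hsumineq := Finset.sum_le_sum (fun i (_ : i ∈ Finset.univ) => key i)
  rw [Finset.sum_sub_distrib, Finset.sum_sub_distrib] at hsumineq
  have hIci : Finset.univ.filter (fun i : Fin k => q ≤ i.val)
      = Finset.Ici (⟨q, hq⟩ : Fin k) := by
    ext x; simp [Finset.mem_Ici, Fin.le_def]
  have e1 : ∑ x : Fin k, (if q ≤ x.val then t else 0) = ((k - q : ℕ) : ℝ) * t := by
    rw [← Finset.sum_filter, hIci, Finset.sum_const, Fin.card_Ici]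
    simp [nsmul_eq_mul]
  have e2 : ∑ x : Fin k, (if q ≤ x.val then μ x else 0)
      = ∑ i ∈ Finset.univ.filter (fun i : Fin k => q ≤ i.val), μ i :=
    (Finset.sum_filter _ _).symm
  have e3 : ∑ x : Fin k, t * c x = t * ((k - q : ℕ) : ℝ) := by
    rw [← Finset.mul_sum, hsum]
  rw [e1, e2, e3] at hsumineq
  linarith

lemma spectral_real {l k : ℕ} (B : Matrix (Fin l) (Fin k) ℝ) :
    Bᵀ * B = ((isHermitian_transpose_mul_self B).eigenvectorUnitary : Matrix (Fin k) (Fin k) ℝ)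
      * diagonal ((isHermitian_transpose_mul_self B).eigenvalues)
      * ((isHermitian_transpose_mul_self B).eigenvectorUnitary : Matrix (Fin k) (Fin k) ℝ)ᵀ := by
  have h := (isHermitian_transpose_mul_self B).spectral_theorem
  refine h.trans ?_
  rw [Unitary.conjStarAlgAut_apply]
  simp [Matrix.star_eq_conjTranspose, Function.comp_def]

lemma unitary_real_mul {k : ℕ} (U : Matrix.unitaryGroup (Fin k) ℝ) :
    (U : Matrix (Fin k) (Fin k) ℝ) * (U : Matrix (Fin k) (Fin k) ℝ)ᵀ = 1 := by
  rw [← Matrix.conjTranspose_eq_transpose_of_trivial, ← Matrix.star_eq_conjTranspose]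
  exact Matrix.mem_unitaryGroup_iff.mp U.2

lemma unitary_real_mul' {k : ℕ} (U : Matrix.unitaryGroup (Fin k) ℝ) :
    (U : Matrix (Fin k) (Fin k) ℝ)ᵀ * (U : Matrix (Fin k) (Fin k) ℝ) = 1 := by
  rw [← Matrix.conjTranspose_eq_transpose_of_trivial, ← Matrix.star_eq_conjTranspose]
  exact Matrix.mem_unitaryGroup_iff'.mp U.2

lemma tail_le_general {l k : ℕ} (B C : Matrix (Fin l) (Fin k) ℝ) (q : ℕ) (hq : q < k)
    (U : Matrix (Fin k) (Fin k) ℝ) (hUU : U * Uᵀ = 1)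
    (lam : Fin k → ℝ) (hspec : Bᵀ * B = U * diagonal lam * Uᵀ)
    (σ : Equiv.Perm (Fin k)) (hanti : ∀ i j : Fin k, i ≤ j → lam (σ j) ≤ lam (σ i))
    (V : Matrix (Fin k) (Fin (k - q)) ℝ) (hV : Vᵀ * V = 1) (hCV : C * V = 0) :
    ∑ i ∈ Finset.univ.filter (fun i : Fin k => q ≤ i.val), lam (σ i) ≤ frobSq (B - C) := by
  set W : Matrix (Fin k) (Fin (k - q)) ℝ := Uᵀ * V with hWdef
  have hWW : Wᵀ * W = 1 := by
    rw [hWdef, transpose_mul, transpose_transpose, Matrix.mul_assoc Vᵀ U (Uᵀ * V),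
      ← Matrix.mul_assoc U Uᵀ V, hUU, Matrix.one_mul, hV]
  set c : Fin k → ℝ := fun i => (W * Wᵀ) i i with hcdef
  have hXt : (B * V)ᵀ * (B * V) = Wᵀ * (diagonal lam * W) := by
    calc (B * V)ᵀ * (B * V) = Vᵀ * ((Bᵀ * B) * V) := by
          rw [transpose_mul, Matrix.mul_assoc Vᵀ Bᵀ (B * V), ← Matrix.mul_assoc Bᵀ B V]
      _ = Wᵀ * (diagonal lam * W) := by
          rw [hspec, hWdef, transpose_mul, transpose_transpose]
          simp only [Matrix.mul_assoc]
  have h3 : frobSq (B * V) = ∑ i, lam i * c i := by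
    rw [frobSq_eq_trace, hXt, Matrix.trace_mul_comm Wᵀ (diagonal lam * W),
      Matrix.mul_assoc (diagonal lam) W Wᵀ]
    simp only [Matrix.trace, Matrix.diag_apply, Matrix.diagonal_mul, hcdef]
  have hbounds := fun i => proj_diag_bounds W hWW i
  have hsumc : ∑ i, c i = ((k - q : ℕ) : ℝ) := by
    have h1 : ∑ i, c i = (W * Wᵀ).trace := by
      simp only [Matrix.trace, Matrix.diag_apply, hcdef]
    rw [h1, Matrix.trace_mul_comm W Wᵀ, hWW, Matrix.trace_one]
    simp
  have hsum' : ∑ i, c (σ i) = ((k - q : ℕ) : ℝ) := by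
    rw [Equiv.sum_comp σ c, hsumc]
  have hkey := sum_mul_ge_tail hq (fun i => lam (σ i)) (fun i => c (σ i)) hanti
    (fun i => (hbounds (σ i)).1) (fun i => (hbounds (σ i)).2) hsum'
  have hperm : ∑ i, lam (σ i) * c (σ i) = ∑ i, lam i * c i :=
    Equiv.sum_comp σ (fun j => lam j * c j)
  have h2 : (B - C) * V = B * V := by rw [Matrix.sub_mul, hCV, sub_zero]
  have h1 : frobSq ((B - C) * V) ≤ frobSq (B - C) := frobSq_mul_le _ V hV
  rw [h2, h3] at h1
  calc ∑ i ∈ Finset.univ.filter (fun i : Fin k => q ≤ i.val), lam (σ i)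
      ≤ ∑ i, lam (σ i) * c (σ i) := hkey
    _ = ∑ i, lam i * c i := hperm
    _ ≤ frobSq (B - C) := h1

lemma frobSq_eq_sum_lam {l k : ℕ} (B : Matrix (Fin l) (Fin k) ℝ)
    (U : Matrix (Fin k) (Fin k) ℝ) (hU' : Uᵀ * U = 1)
    (lam : Fin k → ℝ) (hspec : Bᵀ * B = U * diagonal lam * Uᵀ) :
    frobSq B = ∑ i, lam i := by
  rw [frobSq_eq_trace, hspec, Matrix.trace_mul_cycle U (diagonal lam) Uᵀ, hU', Matrix.one_mul, Matrix.trace_diagonal]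

lemma sValSq_nonneg {m n : ℕ} (A : Matrix (Fin m) (Fin n) ℝ) (i : ℕ) :
    0 ≤ sValSq A i := by
  unfold sValSq
  split
  · have hps : (Aᵀ * A).PosSemidef := by
      rw [← Matrix.conjTranspose_eq_transpose_of_trivial]
      exact Matrix.posSemidef_conjTranspose_mul_self A
    exact hps.eigenvalues_nonneg _
  · exact le_refl 0

lemma sVal_sq {m n : ℕ} (A : Matrix (Fin m) (Fin n) ℝ) (i : ℕ) :
    (sVal A i) ^ 2 = sValSq A i :=
  Real.sq_sqrt (sValSq_nonneg A i)


theorem stmt_7 {m n l k : ℕ} (A : Matrix (Fin m) (Fin n) ℝ)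
    (P : Matrix (Fin m) (Fin l) ℝ) (hP : Pᵀ * P = 1)
    (Q : Matrix (Fin n) (Fin k) ℝ) (hQ : Qᵀ * Q = 1) (r : ℕ) :
    (∀ C : Matrix (Fin l) (Fin k) ℝ,
      frobSq (A - P * C * Qᵀ) =
        frobSq A - frobSq (Pᵀ * A * Q) + frobSq (Pᵀ * A * Q - C)) ∧
    (∀ C : Matrix (Fin l) (Fin k) ℝ, C.rank ≤ r →
      frobSq A - ∑ i ∈ Finset.range r, (sVal (Pᵀ * A * Q) i) ^ 2 ≤
        frobSq (A - P * C * Qᵀ)) := by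
  refine ⟨fun C => part1 A P hP Q hQ C, ?_⟩
  intro C hC
  set B : Matrix (Fin l) (Fin k) ℝ := Pᵀ * A * Q with hBdef
  set lam : Fin k → ℝ := (Matrix.isHermitian_transpose_mul_self B).eigenvalues with hlam
  set σ : Equiv.Perm (Fin k) := Tuple.sort (fun j => -lam j) with hσ
  set U : Matrix (Fin k) (Fin k) ℝ :=
    ((Matrix.isHermitian_transpose_mul_self B).eigenvectorUnitary :
      Matrix (Fin k) (Fin k) ℝ) with hU
  have hspec : Bᵀ * B = U * diagonal lam * Uᵀ := spectral_real B
  have hUU : U * Uᵀ = 1 := unitary_real_mul _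
  have hU' : Uᵀ * U = 1 := unitary_real_mul' _
  have hfB : frobSq B = ∑ i, lam i := frobSq_eq_sum_lam B U hU' lam hspec
  have hanti : ∀ i j : Fin k, i ≤ j → lam (σ j) ≤ lam (σ i) := by
    intro i j hij
    have := Tuple.monotone_sort (fun j => -lam j) hij
    simpa using this
  have hsv : ∀ (i : ℕ) (hik : i < k), sValSq B i = lam (σ ⟨i, hik⟩) := by
    intro i hik
    simp only [sValSq, dif_pos hik]
    rfl
  have hsvsum : ∀ i ∈ Finset.range r, (sVal B i) ^ 2 = sValSq B i :=
    fun i _ => sVal_sq B i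
  have hpart1 := part1 A P hP Q hQ C
  rw [← hBdef] at hpart1
  rw [Finset.sum_congr rfl hsvsum, hpart1]
  rcases lt_or_ge r k with hrk | hrk
  · -- r < k
    obtain ⟨V, hV, hCV⟩ := exists_V C r hC hrk.le
    have htail := tail_le_general B C r hrk U hUU lam hspec σ hanti V hV hCV
    have hsplit : ∑ i, lam (σ i) =
        (∑ i ∈ Finset.univ.filter (fun i : Fin k => i.val < r), lam (σ i))
        + ∑ i ∈ Finset.univ.filter (fun i : Fin k => r ≤ i.val), lam (σ i) := by
      rw [← Finset.sum_filter_add_sum_filter_not Finset.univ (fun i : Fin k => i.val < r)]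
      congr 1
      apply Finset.sum_congr _ (fun _ _ => rfl)
      apply Finset.filter_congr
      intro x _
      simp [not_lt]
    have hperm : ∑ i, lam (σ i) = ∑ i, lam i := Equiv.sum_comp σ lam
    have hrange : ∑ i ∈ Finset.range r, sValSq B i
        = ∑ i ∈ Finset.univ.filter (fun i : Fin k => i.val < r), lam (σ i) := by
      refine Finset.sum_nbij' (fun a => (⟨min a (k-1), by omega⟩ : Fin k))
        (fun b => b.val) ?_ ?_ ?_ ?_ ?_
      · intro a ha
        simp only [Finset.mem_filter, Finset.mem_univ, true_and]
        have := Finset.mem_range.mp ha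
        show min a (k-1) < r
        omega
      · intro b hb
        simp only [Finset.mem_filter, Finset.mem_univ, true_and] at hb
        exact Finset.mem_range.mpr hb
      · intro a ha
        have := Finset.mem_range.mp ha
        show min a (k-1) = a
        omega
      · intro b hb
        simp only [Finset.mem_filter, Finset.mem_univ, true_and] at hb
        apply Fin.ext
        show min (b : ℕ) (k-1) = (b : ℕ)
        omega
      · intro a ha
        have hak : a < k := by have := Finset.mem_range.mp ha; omega
        rw [hsv a hak]
        congr 2
        apply Fin.ext
        show a = min a (k-1)
        omega
    rw [hrange]
    have hnn := frobSq_nonneg (B - C)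
    linarith [htail, hsplit, hperm, hfB]
  · -- k ≤ r
    have hfull : ∑ i ∈ Finset.range r, sValSq B i = ∑ i ∈ Finset.range k, sValSq B i := by
      symm
      apply Finset.sum_subset (Finset.range_subset_range.mpr hrk)
      intro x _ hx
      have hxk : ¬ x < k := by simpa using hx
      simp [sValSq, hxk]
    have hrk2 : ∑ i ∈ Finset.range k, sValSq B i = ∑ i, lam i := by
      rw [← Fin.sum_univ_eq_sum_range (fun i => sValSq B i) k]
      rw [show ∑ i : Fin k, sValSq B i.val = ∑ i : Fin k, lam (σ i) from ?_]
      · exact Equiv.sum_comp σ lam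
      · apply Finset.sum_congr rfl
        intro i _
        rw [hsv i.val i.isLt]
    rw [hfull, hrk2]
    have hnn := frobSq_nonneg (B - C)
    linarith [hfB]
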